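/- arXiv:1503.05876 — 2 statements merged into one kernel-verified Lean document; each statement's English description precedes it below -/
import Mathlib

section
/- Under the hypotheses of the profile likelihood construction, the third derivative of the profile log-likelihood at the maximum satisfies M_{111}(ψ̂) = Σ_{r,s,t} L̂_{rst} L̂^{r1} L̂^{s1} L̂^{t1} / (L̂^{11})³, where L̂_{rst} are third partial derivatives of L at θ̂ and (L̂^{rs}) is the inverse Hessian. -/
open Matrix

/-- Coordinatewise partial derivative of a function of `θ : Fin m → ℝ`. -/
noncomputable def pd {m : ℕ} (f : (Fin m → ℝ) → ℝ) (θ : Fin m → ℝ) (r : Fin m) : ℝ :=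
  deriv (fun x : ℝ => f (Function.update θ r x)) (θ r)


lemma pd_eq {m : ℕ} {f : (Fin m → ℝ) → ℝ} {θ : Fin m → ℝ} (hf : DifferentiableAt ℝ f θ)
    (r : Fin m) : pd f θ r = fderiv ℝ f θ (Pi.single r 1) := by
  have hu : HasDerivAt (Function.update θ r) (Pi.single r (1:ℝ)) (θ r) :=
    hasDerivAt_update θ r (θ r)
  have h : HasDerivAt (fun x : ℝ => f (Function.update θ r x))
      (fderiv ℝ f θ (Pi.single r 1)) (θ r) :=
    hf.hasFDerivAt.comp_hasDerivAt_of_eq (θ r) hu (by simp)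
  exact h.deriv

lemma clm_expand {m : ℕ} {G : Type*} [NormedAddCommGroup G] [NormedSpace ℝ G]
    (T : (Fin m → ℝ) →L[ℝ] G) (u : Fin m → ℝ) :
    T u = ∑ r, u r • T (Pi.single r 1) := by
  have hu : u = ∑ r : Fin m, u r • (Pi.single r 1 : Fin m → ℝ) := by
    funext j
    simp [Pi.single_apply, Finset.sum_apply]
  conv_lhs => rw [hu]
  rw [map_sum]
  simp [_root_.map_smul]

lemma clm_expand_mul {m : ℕ} (T : (Fin m → ℝ) →L[ℝ] ℝ) (u : Fin m → ℝ) :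
    T u = ∑ r, u r * T (Pi.single r 1) := by
  simpa [smul_eq_mul] using clm_expand T u

lemma clm3_expand {m : ℕ}
    (T : (Fin m → ℝ) →L[ℝ] (Fin m → ℝ) →L[ℝ] (Fin m → ℝ) →L[ℝ] ℝ)
    (a b c : Fin m → ℝ) :
    T a b c = ∑ r, ∑ s, ∑ t,
      T (Pi.single r 1) (Pi.single s 1) (Pi.single t 1) * a r * b s * c t := by
  rw [show T a = ∑ r, a r • T (Pi.single r 1) from clm_expand (G := (Fin m → ℝ) →L[ℝ] (Fin m → ℝ) →L[ℝ] ℝ) T a]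
  simp only [ContinuousLinearMap.sum_apply, ContinuousLinearMap.smul_apply, smul_eq_mul]
  refine Finset.sum_congr rfl fun r _ => ?_
  rw [show T (Pi.single r 1) b = ∑ s, b s • T (Pi.single r 1) (Pi.single s 1) from clm_expand (G := (Fin m → ℝ) →L[ℝ] ℝ) _ b]
  simp only [ContinuousLinearMap.sum_apply, ContinuousLinearMap.smul_apply, smul_eq_mul,
    Finset.mul_sum]
  refine Finset.sum_congr rfl fun s _ => ?_
  rw [clm_expand_mul (T (Pi.single r 1) (Pi.single s 1)) c, Finset.mul_sum, Finset.mul_sum]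
  refine Finset.sum_congr rfl fun t _ => ?_
  ring
/-- Third derivative of the profile log-likelihood at the maximum:
`M_{111}(ψ̂) = Σ_{r,s,t} L̂_{rst} L̂^{r1} L̂^{s1} L̂^{t1} / (L̂^{11})³`. -/
theorem profile_third_deriv
    {q : ℕ}
    (L : (Fin (q + 1) → ℝ) → ℝ) (hL : ContDiff ℝ (⊤ : ℕ∞) L)
    (ψhat : ℝ) (φhat : Fin q → ℝ)
    (φtilde : ℝ → Fin q → ℝ) (hφ : ContDiff ℝ (⊤ : ℕ∞) (fun ψ => φtilde ψ))
    (hφhat : φtilde ψhat = φhat)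
    (hstat : ∀ ψ (i : Fin q), pd L (Fin.cons ψ (φtilde ψ)) i.succ = 0)
    (hcrit : ∀ r : Fin (q + 1), pd L (Fin.cons ψhat φhat) r = 0)
    (Hess : Matrix (Fin (q + 1)) (Fin (q + 1)) ℝ)
    (hHess : ∀ r s, Hess r s = pd (fun θ => pd L θ s) (Fin.cons ψhat φhat) r)
    (hunit : IsUnit Hess.det)
    -- third partial derivatives of L at θ̂
    (L3 : Fin (q + 1) → Fin (q + 1) → Fin (q + 1) → ℝ)
    (hL3 : ∀ r s t, L3 r s t
      = pd (fun θ => pd (fun θ' => pd L θ' t) θ s) (Fin.cons ψhat φhat) r)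
    (M : ℝ → ℝ) (hM : ∀ ψ, M ψ = L (Fin.cons ψ (φtilde ψ))) :
    deriv (deriv (deriv M)) ψhat
      = (∑ r, ∑ s, ∑ t, L3 r s t * Hess⁻¹ r 0 * Hess⁻¹ s 0 * Hess⁻¹ t 0)
          / (Hess⁻¹ 0 0) ^ 3 := by
  classical
  set e : ℝ → Fin (q + 1) → ℝ := fun ψ => Fin.cons ψ (φtilde ψ) with he_def
  have heθ : e ψhat = Fin.cons ψhat φhat := by simp [he_def, hφhat]
  have he : ContDiff ℝ (⊤ : ℕ∞) e := by
    rw [contDiff_pi]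
    intro i
    refine Fin.cases ?_ ?_ i
    · simpa [he_def] using contDiff_fun_id
    · intro j
      simpa [he_def] using (contDiff_pi.1 hφ j)
  set F := fderiv ℝ L with hF_def
  set F2 := fderiv ℝ F with hF2_def
  set F3 := fderiv ℝ F2 with hF3_def
  have hFc : ContDiff ℝ (⊤ : ℕ∞) F := hL.fderiv_right (by simp)
  have hF2c : ContDiff ℝ (⊤ : ℕ∞) F2 := hFc.fderiv_right (by simp)
  set v : ℝ → Fin (q + 1) → ℝ := fun ψ => deriv e ψ with hv_def
  set w : ℝ → Fin (q + 1) → ℝ := fun ψ => deriv v ψ with hw_def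
  have hvc : ContDiff ℝ (⊤ : ℕ∞) v := by
    have h : ContDiff ℝ (⊤ : ℕ∞) (fun ψ => fderiv ℝ e ψ 1) :=
      (he.fderiv_right (by simp)).clm_apply contDiff_const
    exact h
  have hwc : ContDiff ℝ (⊤ : ℕ∞) w := by
    have h : ContDiff ℝ (⊤ : ℕ∞) (fun ψ => fderiv ℝ v ψ 1) :=
      (hvc.fderiv_right (by simp)).clm_apply contDiff_const
    exact h
  have hde : ∀ ψ, HasDerivAt e (v ψ) ψ := fun ψ =>
    (he.differentiable (by simp) ψ).hasDerivAt
  have hdv : ∀ ψ, HasDerivAt v (w ψ) ψ := fun ψ =>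
    (hvc.differentiable (by simp) ψ).hasDerivAt
  have hdw : HasDerivAt w (deriv w ψhat) ψhat :=
    (hwc.differentiable (by simp) ψhat).hasDerivAt
  have hLd : ∀ x, DifferentiableAt ℝ L x := fun x => hL.differentiable (by simp) x
  have hFd : ∀ x, DifferentiableAt ℝ F x := fun x => hFc.differentiable (by simp) x
  have hF2d : ∀ x, DifferentiableAt ℝ F2 x := fun x => hF2c.differentiable (by simp) x
  -- components of v and w
  have hv0 : ∀ ψ, v ψ 0 = 1 := by
    intro ψ
    have h1 := (hasDerivAt_pi.1 (hde ψ)) 0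
    have h2 : HasDerivAt (fun ψ : ℝ => e ψ 0) 1 ψ := by
      simpa [he_def] using (hasDerivAt_id' (x := ψ))
    exact h1.unique h2
  have hw0 : w ψhat 0 = 0 := by
    have h1 := (hasDerivAt_pi.1 (hdv ψhat)) 0
    have h2 : HasDerivAt (fun ψ : ℝ => v ψ 0) 0 ψhat := by
      have h3 : (fun ψ : ℝ => v ψ 0) = fun _ => (1 : ℝ) := funext hv0
      rw [h3]
      exact hasDerivAt_const _ _
    exact h1.unique h2
  -- curve derivatives of F-applications
  have hcF : ∀ ψ, HasDerivAt (fun t => F (e t)) (F2 (e ψ) (v ψ)) ψ := fun ψ =>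
    (hFd (e ψ)).hasFDerivAt.comp_hasDerivAt ψ (hde ψ)
  have hcF2 : ∀ ψ, HasDerivAt (fun t => F2 (e t)) (F3 (e ψ) (v ψ)) ψ := fun ψ =>
    HasFDerivAt.comp_hasDerivAt (E := (Fin (q + 1) → ℝ) →L[ℝ] (Fin (q + 1) → ℝ) →L[ℝ] ℝ) ψ
      (hF2d (e ψ)).hasFDerivAt (hde ψ)
  have hcF2v : ∀ ψ, HasDerivAt (fun t => F2 (e t) (v t))
      (F3 (e ψ) (v ψ) (v ψ) + F2 (e ψ) (w ψ)) ψ := fun ψ =>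
    (hcF2 ψ).clm_apply (hdv ψ)
  -- stationarity facts
  have hstatF : ∀ ψ (j : Fin q), F (e ψ) (Pi.single j.succ 1) = 0 := by
    intro ψ j
    have h := hstat ψ j
    rw [pd_eq (hLd _) j.succ] at h
    exact h
  have h2stat : ∀ ψ (j : Fin q), F2 (e ψ) (v ψ) (Pi.single j.succ 1) = 0 := by
    intro ψ j
    have hfun : (fun t => F (e t) (Pi.single (Fin.succ j) 1 : Fin (q + 1) → ℝ))
        = fun _ => (0 : ℝ) := funext fun t => hstatF t j
    have hd : HasDerivAt (fun t => F (e t) (Pi.single (Fin.succ j) 1 : Fin (q + 1) → ℝ))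
        (F2 (e ψ) (v ψ) (Pi.single (Fin.succ j) 1) + F (e ψ) 0) ψ :=
      (hcF ψ).clm_apply (hasDerivAt_const ψ _)
    rw [hfun] at hd
    have h := hd.unique (hasDerivAt_const _ _)
    simpa using h
  have h3stat : ∀ j : Fin q,
      F3 (e ψhat) (v ψhat) (v ψhat) (Pi.single j.succ 1)
        + F2 (e ψhat) (w ψhat) (Pi.single j.succ 1) = 0 := by
    intro j
    have hfun : (fun t => F2 (e t) (v t) (Pi.single (Fin.succ j) 1 : Fin (q + 1) → ℝ))
        = fun _ => (0 : ℝ) := funext fun t => h2stat t j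
    have hd : HasDerivAt (fun t => F2 (e t) (v t) (Pi.single (Fin.succ j) 1 : Fin (q + 1) → ℝ))
        ((F3 (e ψhat) (v ψhat) (v ψhat) + F2 (e ψhat) (w ψhat)) (Pi.single (Fin.succ j) 1)
          + F2 (e ψhat) (v ψhat) 0) ψhat :=
      (hcF2v ψhat).clm_apply (hasDerivAt_const ψhat _)
    rw [hfun] at hd
    have h := hd.unique (hasDerivAt_const _ _)
    simpa [ContinuousLinearMap.add_apply] using h
  -- derivatives of M
  have hMe : M = fun ψ => L (e ψ) := funext fun ψ => hM ψ
  have hdM : ∀ ψ, HasDerivAt M (F (e ψ) (v ψ)) ψ := by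
    intro ψ
    rw [hMe]
    exact (hLd (e ψ)).hasFDerivAt.comp_hasDerivAt ψ (hde ψ)
  have hM1 : deriv M = fun ψ => F (e ψ) (v ψ) := funext fun ψ => (hdM ψ).deriv
  have hdM2 : ∀ ψ, HasDerivAt (fun t => F (e t) (v t))
      (F2 (e ψ) (v ψ) (v ψ) + F (e ψ) (w ψ)) ψ := fun ψ => (hcF ψ).clm_apply (hdv ψ)
  have hM2 : deriv (deriv M) = fun ψ => F2 (e ψ) (v ψ) (v ψ) + F (e ψ) (w ψ) := by
    rw [hM1]
    exact funext fun ψ => (hdM2 ψ).deriv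
  have hd31 : HasDerivAt (fun t => F2 (e t) (v t) (v t))
      ((F3 (e ψhat) (v ψhat) (v ψhat) + F2 (e ψhat) (w ψhat)) (v ψhat)
        + F2 (e ψhat) (v ψhat) (w ψhat)) ψhat := (hcF2v ψhat).clm_apply (hdv ψhat)
  have hd32 : HasDerivAt (fun t => F (e t) (w t))
      (F2 (e ψhat) (v ψhat) (w ψhat) + F (e ψhat) (deriv w ψhat)) ψhat :=
    (hcF ψhat).clm_apply hdw
  have hM3 : deriv (deriv (deriv M)) ψhat
      = (F3 (e ψhat) (v ψhat) (v ψhat) + F2 (e ψhat) (w ψhat)) (v ψhat)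
        + F2 (e ψhat) (v ψhat) (w ψhat)
        + (F2 (e ψhat) (v ψhat) (w ψhat) + F (e ψhat) (deriv w ψhat)) := by
    rw [hM2]
    exact (hd31.add hd32).deriv
  -- criticality: gradient vanishes at θ̂
  have hFzero : ∀ u, F (e ψhat) u = 0 := by
    intro u
    rw [clm_expand_mul (F (e ψhat)) u]
    refine Finset.sum_eq_zero fun r _ => ?_
    have h := hcrit r
    rw [pd_eq (hLd _) r] at h
    rw [heθ, h, mul_zero]
  -- symmetry of the second derivative
  have hsymm : ∀ a b, F2 (e ψhat) a b = F2 (e ψhat) b a := by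
    intro a b
    exact (hL.contDiffAt.isSymmSndFDerivAt (by rw [minSmoothness_of_isRCLikeNormedField]; exact WithTop.coe_le_coe.2 le_top)) a b
  -- F2 v w = 0
  have hF2vw : F2 (e ψhat) (v ψhat) (w ψhat) = 0 := by
    rw [clm_expand_mul (F2 (e ψhat) (v ψhat)) (w ψhat), Fin.sum_univ_succ, hw0]
    simp only [zero_mul, zero_add]
    refine Finset.sum_eq_zero fun j _ => ?_
    rw [h2stat ψhat j, mul_zero]
  have hF2wv : F2 (e ψhat) (w ψhat) (v ψhat) = 0 := by
    rw [hsymm]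
    exact hF2vw
  -- identify Hess and L3 with fderivs
  have hgrad2 : ∀ (θ : Fin (q + 1) → ℝ) (s t : Fin (q + 1)),
      pd (fun θ' => pd L θ' t) θ s = F2 θ (Pi.single s 1) (Pi.single t 1) := by
    intro θ s t
    have hFapp : (fun θ' => pd L θ' t) = fun θ' => F θ' (Pi.single t 1) :=
      funext fun θ' => pd_eq (hLd θ') t
    rw [hFapp]
    have hdiff : DifferentiableAt ℝ (fun θ' => F θ' (Pi.single t 1 : Fin (q + 1) → ℝ)) θ :=
      (hFd θ).clm_apply (differentiableAt_const _)
    rw [pd_eq hdiff s, fderiv_clm_apply (hFd θ) (differentiableAt_const _)]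
    simp [← hF2_def]
  have hHess' : ∀ r s, Hess r s = F2 (Fin.cons ψhat φhat) (Pi.single r 1) (Pi.single s 1) := by
    intro r s
    rw [hHess r s, hgrad2]
  have hL3' : ∀ r s t, L3 r s t
      = F3 (Fin.cons ψhat φhat) (Pi.single r 1) (Pi.single s 1) (Pi.single t 1) := by
    intro r s t
    have hgrad3 : (fun θ => pd (fun θ' => pd L θ' t) θ s)
        = fun θ => F2 θ (Pi.single s 1) (Pi.single t 1) :=
      funext fun θ => hgrad2 θ s t
    rw [hL3 r s t, hgrad3]
    have hdiff1 : DifferentiableAt ℝ (fun θ => F2 θ (Pi.single s 1 : Fin (q + 1) → ℝ))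
        (Fin.cons ψhat φhat) := (hF2d _).clm_apply (differentiableAt_const _)
    have hdiff : DifferentiableAt ℝ
        (fun θ => F2 θ (Pi.single s 1) (Pi.single t 1 : Fin (q + 1) → ℝ))
        (Fin.cons ψhat φhat) := hdiff1.clm_apply (differentiableAt_const _)
    rw [pd_eq hdiff r, fderiv_clm_apply hdiff1 (differentiableAt_const _),
      fderiv_clm_apply (hF2d _) (differentiableAt_const _)]
    simp [← hF3_def]
  -- the key linear-algebra identity
  have hkey1 : Hess *ᵥ v ψhat = Pi.single 0 (F2 (e ψhat) (v ψhat) (Pi.single 0 1)) := by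
    funext i
    have h1 : (Hess *ᵥ v ψhat) i = ∑ s, Hess i s * v ψhat s := by
      simp [Matrix.mulVec, dotProduct]
    rw [h1]
    have h2 : ∑ s, Hess i s * v ψhat s = F2 (e ψhat) (Pi.single i 1) (v ψhat) := by
      rw [clm_expand_mul (F2 (e ψhat) (Pi.single i 1)) (v ψhat)]
      refine Finset.sum_congr rfl fun s _ => ?_
      rw [hHess' i s, heθ]
      ring
    rw [h2, hsymm]
    refine Fin.cases ?_ ?_ i
    · simp
    · intro j
      rw [h2stat ψhat j]
      simp [Pi.single_apply, Fin.succ_ne_zero]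
  have hvr : ∀ r, v ψhat r = Hess⁻¹ r 0 * F2 (e ψhat) (v ψhat) (Pi.single 0 1) := by
    intro r
    have h := congrArg (fun u => Hess⁻¹ *ᵥ u) hkey1
    simp only [Matrix.mulVec_mulVec, Matrix.nonsing_inv_mul Hess hunit,
      Matrix.one_mulVec] at h
    have h2 := congrFun h r
    rw [h2]
    simp [Matrix.mulVec, dotProduct, Pi.single_apply]
  have hA00c : Hess⁻¹ 0 0 * F2 (e ψhat) (v ψhat) (Pi.single 0 1) = 1 := by
    rw [← hvr 0, hv0]
  have hA00 : Hess⁻¹ 0 0 ≠ 0 := left_ne_zero_of_mul_eq_one hA00c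
  have hAr0 : ∀ r, Hess⁻¹ r 0 = v ψhat r * Hess⁻¹ 0 0 := by
    intro r
    have h : Hess⁻¹ r 0 * (F2 (e ψhat) (v ψhat) (Pi.single 0 1) * Hess⁻¹ 0 0)
        = v ψhat r * Hess⁻¹ 0 0 := by
      rw [← mul_assoc, ← hvr r]
    rwa [mul_comm (F2 (e ψhat) (v ψhat) (Pi.single 0 1)) _, hA00c, mul_one] at h
  -- F3 v v v expansion using the third-derivative stationarity
  have hF3vvv : F3 (e ψhat) (v ψhat) (v ψhat) (v ψhat)
      = ∑ r, ∑ s, ∑ t, F3 (e ψhat) (Pi.single r 1) (Pi.single s 1) (Pi.single t 1)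
          * v ψhat r * v ψhat s * v ψhat t := clm3_expand _ _ _ _
  -- final computation
  have hRHS : ∑ r, ∑ s, ∑ t, L3 r s t * Hess⁻¹ r 0 * Hess⁻¹ s 0 * Hess⁻¹ t 0
      = F3 (e ψhat) (v ψhat) (v ψhat) (v ψhat) * Hess⁻¹ 0 0 ^ 3 := by
    rw [hF3vvv, Finset.sum_mul]
    refine Finset.sum_congr rfl fun r _ => ?_
    rw [Finset.sum_mul]
    refine Finset.sum_congr rfl fun s _ => ?_
    rw [Finset.sum_mul]
    refine Finset.sum_congr rfl fun t _ => ?_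
    rw [hL3' r s t, hAr0 r, hAr0 s, hAr0 t, ← heθ]
    ring
  rw [hM3, hF2vw, hFzero, ContinuousLinearMap.add_apply, hF2wv, hRHS,
    mul_div_cancel_right₀ _ (pow_ne_zero 3 hA00)]
  ring
end

section
/- Let B, C, D be real constants with E = BD - C² ≠ 0 and C ≠ 0 or D ≠ 0, and suppose a smooth positive π(μ, σ) on ℝ × (0,∞) satisfies (σ² D / E)(∂ log π/∂μ) - (σ² C / E)(∂ log π/∂σ) = σ C / E for all (μ, σ), simultaneously for all triples (B, C, D) in some set containing two triples (B₁,C₁,D₁), (B₂,C₂,D₂) with C₁D₂ ≠ C₂D₁. Then ∂ log π/∂μ = 0 and ∂ log π/∂σ = -1/σ, so π ∝ 1/σ. -/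
open Set

private lemma reduce_eq (E x y c d s : ℝ) (hE : E ≠ 0) (hs : s ≠ 0)
    (h : (s^2*d/E)*x - (s^2*c/E)*y = s*c/E) : d*x - c*y = c/s := by
  field_simp at h ⊢
  have : s * (s * (d * x - c * y)) = s * c := by linear_combination s * h
  exact mul_left_cancel₀ hs this

/-- If the conditional Welch–Peers matching condition (4) of the location-scale
model holds for two configurations `(B₁,C₁,D₁)`, `(B₂,C₂,D₂)` with
`C₁D₂ ≠ C₂D₁`, then `∂ log π/∂μ = 0`, `∂ log π/∂σ = -1/σ`, so `π ∝ 1/σ`. -/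
theorem matching_condition_forces_jeffreys
    (π : ℝ → ℝ → ℝ)
    (hpos : ∀ μ σ : ℝ, 0 < σ → 0 < π μ σ)
    (hsmooth : ContDiffOn ℝ 1 (fun p : ℝ × ℝ => π p.1 p.2) (univ ×ˢ Ioi (0 : ℝ)))
    (B₁ C₁ D₁ B₂ C₂ D₂ : ℝ)
    (hE₁ : B₁ * D₁ - C₁ ^ 2 ≠ 0) (hE₂ : B₂ * D₂ - C₂ ^ 2 ≠ 0)
    (hCD₁ : C₁ ≠ 0 ∨ D₁ ≠ 0) (hCD₂ : C₂ ≠ 0 ∨ D₂ ≠ 0)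
    (hindep : C₁ * D₂ ≠ C₂ * D₁)
    (hmatch : ∀ (B C D : ℝ), ((B, C, D) = (B₁, C₁, D₁) ∨ (B, C, D) = (B₂, C₂, D₂)) →
      ∀ μ σ : ℝ, 0 < σ →
        (σ ^ 2 * D / (B * D - C ^ 2)) * deriv (fun m => Real.log (π m σ)) μ
          - (σ ^ 2 * C / (B * D - C ^ 2)) * deriv (fun s => Real.log (π μ s)) σ
          = σ * C / (B * D - C ^ 2)) :
    (∀ μ σ : ℝ, 0 < σ →
      deriv (fun m => Real.log (π m σ)) μ = 0 ∧
      deriv (fun s => Real.log (π μ s)) σ = -1 / σ) ∧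
    (∃ c : ℝ, 0 < c ∧ ∀ μ σ : ℝ, 0 < σ → π μ σ = c / σ) := by
  -- Part 1: the two linear equations force the partial derivatives.
  have part1 : ∀ μ σ : ℝ, 0 < σ →
      deriv (fun m => Real.log (π m σ)) μ = 0 ∧
      deriv (fun s => Real.log (π μ s)) σ = -1 / σ := by
    intro μ σ hσ
    have hσ0 : σ ≠ 0 := ne_of_gt hσ
    set x := deriv (fun m => Real.log (π m σ)) μ with hx
    set y := deriv (fun s => Real.log (π μ s)) σ with hy
    have e1 : D₁ * x - C₁ * y = C₁ / σ :=
      reduce_eq _ _ _ _ _ _ hE₁ hσ0 (hmatch B₁ C₁ D₁ (Or.inl rfl) μ σ hσ)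
    have e2 : D₂ * x - C₂ * y = C₂ / σ :=
      reduce_eq _ _ _ _ _ _ hE₂ hσ0 (hmatch B₂ C₂ D₂ (Or.inr rfl) μ σ hσ)
    have hdet : C₂ * D₁ - C₁ * D₂ ≠ 0 := by
      intro h; exact hindep (by linarith)
    have hx0 : x = 0 := by
      have h : (C₂ * D₁ - C₁ * D₂) * x = 0 := by
        linear_combination C₂ * e1 - C₁ * e2
      exact (mul_eq_zero.mp h).resolve_left hdet
    have hC : C₁ ≠ 0 ∨ C₂ ≠ 0 := by
      by_contra h
      push_neg at h
      exact hindep (by rw [h.1, h.2]; ring)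
    have hy0 : y = -1 / σ := by
      rcases hC with hC | hC
      · rw [hx0] at e1
        field_simp at e1 ⊢
        have : C₁ * (y * σ) = C₁ * (-1) := by nlinarith [e1]
        have := mul_left_cancel₀ hC this
        linarith
      · rw [hx0] at e2
        field_simp at e2 ⊢
        have : C₂ * (y * σ) = C₂ * (-1) := by nlinarith [e2]
        have := mul_left_cancel₀ hC this
        linarith
    exact ⟨hx0, hy0⟩
  refine ⟨part1, ?_⟩
  -- Part 2: integrate.
  set F : ℝ × ℝ → ℝ := fun p => π p.1 p.2 with hF
  set s : Set (ℝ × ℝ) := univ ×ˢ Ioi (0 : ℝ) with hs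
  have hsopen : IsOpen s := isOpen_univ.prod isOpen_Ioi
  have hdiff : ∀ p ∈ s, DifferentiableAt ℝ F p := fun p hp =>
    (hsmooth.differentiableOn one_ne_zero).differentiableAt (hsopen.mem_nhds hp)
  have hmem : ∀ μ σ : ℝ, 0 < σ → ((μ, σ) : ℝ × ℝ) ∈ s := fun μ σ hσ =>
    ⟨mem_univ _, hσ⟩
  -- slice derivatives
  have key : ∀ p ∈ s, HasFDerivAt (fun q : ℝ × ℝ => Real.log (F q) + Real.log q.2)
      (0 : ℝ × ℝ →L[ℝ] ℝ) p := by
    intro p hp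
    obtain ⟨μ, σ⟩ := p
    have hσ : 0 < σ := hp.2
    have hπ : 0 < π μ σ := hpos μ σ hσ
    have hFd := (hdiff _ hp).hasFDerivAt
    set L0 := fderiv ℝ F (μ, σ) with hL0
    -- μ-slice
    have hsl1 : HasDerivAt (fun m => π m σ) (L0 (1, 0)) μ := by
      have hinner : HasDerivAt (fun m : ℝ => ((m, σ) : ℝ × ℝ)) (1, 0) μ :=
        (hasDerivAt_id μ).prodMk (hasDerivAt_const μ σ)
      exact hFd.comp_hasDerivAt μ hinner
    have hsl2 : HasDerivAt (fun t => π μ t) (L0 (0, 1)) σ := by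
      have hinner : HasDerivAt (fun t : ℝ => ((μ, t) : ℝ × ℝ)) (0, 1) σ :=
        (hasDerivAt_const σ μ).prodMk (hasDerivAt_id σ)
      exact hFd.comp_hasDerivAt σ hinner
    have hlog1 : HasDerivAt (fun m => Real.log (π m σ)) (L0 (1, 0) / π μ σ) μ :=
      hsl1.log (ne_of_gt hπ)
    have hlog2 : HasDerivAt (fun t => Real.log (π μ t)) (L0 (0, 1) / π μ σ) σ :=
      hsl2.log (ne_of_gt hπ)
    obtain ⟨p1, p2⟩ := part1 μ σ hσ
    have ha : L0 (1, 0) = 0 := by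
      have := hlog1.deriv
      rw [p1] at this
      field_simp at this
      linarith [this]
    have hb : L0 (0, 1) = -(π μ σ) / σ := by
      have := hlog2.deriv
      rw [p2] at this
      field_simp at this ⊢
      linarith
    -- full derivative
    have hG : HasFDerivAt (fun q : ℝ × ℝ => Real.log (F q) + Real.log q.2)
        ((π μ σ)⁻¹ • L0 + σ⁻¹ • (ContinuousLinearMap.snd ℝ ℝ ℝ)) (μ, σ) := by
      have h1 : HasFDerivAt (fun q : ℝ × ℝ => Real.log (F q)) ((π μ σ)⁻¹ • L0) (μ, σ) :=
        hFd.log (ne_of_gt hπ)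
      have h2 : HasFDerivAt (fun q : ℝ × ℝ => Real.log q.2)
          (σ⁻¹ • (ContinuousLinearMap.snd ℝ ℝ ℝ)) (μ, σ) := by
        have h := HasFDerivAt.log (hasFDerivAt_snd (𝕜 := ℝ))
          (show ((μ, σ) : ℝ × ℝ).2 ≠ 0 from ne_of_gt hσ)
        simpa using h
      exact h1.add h2
    have hzero : ((π μ σ)⁻¹ • L0 + σ⁻¹ • (ContinuousLinearMap.snd ℝ ℝ ℝ))
        = (0 : ℝ × ℝ →L[ℝ] ℝ) := by
      apply ContinuousLinearMap.ext
      intro v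
      have hv : (v : ℝ × ℝ) = v.1 • ((1, 0) : ℝ × ℝ) + v.2 • ((0, 1) : ℝ × ℝ) := by
        simp [Prod.ext_iff]
      rw [hv]
      simp only [ContinuousLinearMap.add_apply, ContinuousLinearMap.smul_apply,
        ContinuousLinearMap.coe_snd', map_add, map_smul]
      rw [ha, hb]
      simp [Prod.smul_mk]
      field_simp
      right; ring
    rw [hzero] at hG
    exact hG
  have hconv : Convex ℝ s := convex_univ.prod (convex_Ioi 0)
  have hdiffG : DifferentiableOn ℝ (fun q : ℝ × ℝ => Real.log (F q) + Real.log q.2) s :=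
    fun p hp => ((key p hp).differentiableAt).differentiableWithinAt
  have hfw : ∀ p ∈ s, fderivWithin ℝ (fun q : ℝ × ℝ => Real.log (F q) + Real.log q.2) s p = 0 := by
    intro p hp
    rw [fderivWithin_of_isOpen hsopen hp]
    exact (key p hp).fderiv
  refine ⟨π 0 1, hpos 0 1 one_pos, ?_⟩
  intro μ σ hσ
  have hconst := hconv.is_const_of_fderivWithin_eq_zero hdiffG hfw
      (hmem μ σ hσ) (hmem 0 1 one_pos)
  simp only [hF] at hconst
  have hπ : 0 < π μ σ := hpos μ σ hσ
  have h01 : 0 < π 0 1 := hpos 0 1 one_pos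
  have : Real.log (π μ σ * σ) = Real.log (π 0 1) := by
    rw [Real.log_mul (ne_of_gt hπ) (ne_of_gt hσ)]
    simpa using hconst
  have := Real.exp_log (mul_pos hπ hσ) ▸ Real.exp_log h01 ▸ congrArg Real.exp this
  field_simp
  linarith [this]
end
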